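/- For every n-node state space A, there is a historyless randomized uncoupled protocol self-stabilizing on all games over A if and only if the stay-or-roll protocol is self-stabilizing on all games over A. -/

import Mathlib

open scoped Classical

variable {n : ℕ} {A : Fin n → Type*}

/-- `α` is a best response of node `i` at state `a` with respect to `i`'s own
utility function `ui`. -/
def IsBR1 (ui : (∀ j, A j) → ℝ) (i : Fin n) (α : A i) (a : ∀ j, A j) : Prop :=
  ∀ β : A i, ui (Function.update a i β) ≤ ui (Function.update a i α)

/-- A pure Nash equilibrium: every node is best-responding. -/
def PNE (u : ∀ i : Fin n, (∀ j, A j) → ℝ) (a : ∀ j, A j) : Prop :=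
  ∀ i : Fin n, IsBR1 (u i) i (a i) a

/-- `α` is a weakly dominant action of node `i`: it is a best response at every
state. -/
def WDom (ui : (∀ j, A j) → ℝ) (i : Fin n) (α : A i) : Prop :=
  ∀ a : ∀ j, A j, IsBR1 ui i α a

/-- Transition probability of the synchronous dynamics: all nodes simultaneously and
independently sample new actions from their randomized reaction functions. -/
def kernel (f : ∀ i : Fin n, (∀ j, A j) → A i → ℝ) (a b : ∀ j, A j) : ℝ :=
  ∏ i : Fin n, f i a (b i)

/-- Distribution of the state at time `t`, starting from `a0`. -/
noncomputable def evolve [∀ i, Fintype (A i)] [∀ i, DecidableEq (A i)]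
    (f : ∀ i : Fin n, (∀ j, A j) → A i → ℝ) (a0 : ∀ j, A j) :
    ℕ → (∀ j, A j) → ℝ
  | 0 => fun b => if b = a0 then 1 else 0
  | t + 1 => fun b => ∑ a : ∀ j, A j, evolve f a0 t a * kernel f a b

/-- A historyless randomized uncoupled protocol assigns to each node's utility
function (independently of the others' utilities) a randomized reaction function;
validity says each value is a probability distribution over the node's actions. -/
def ValidProto [∀ i, Fintype (A i)]
    (P : ∀ i : Fin n, ((∀ j, A j) → ℝ) → (∀ j, A j) → A i → ℝ) : Prop :=
  ∀ (i : Fin n) (ui : (∀ j, A j) → ℝ) (a : ∀ j, A j),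
    (∀ α : A i, 0 ≤ P i ui a α) ∧ ∑ α : A i, P i ui a α = 1

/-- The protocol is self-stabilizing on all games over `A`: for every game with at
least one pure Nash equilibrium, from every initial state the probability of being
at a PNE at time `t` tends to `1`. -/
def SelfStab [∀ i, Fintype (A i)] [∀ i, DecidableEq (A i)]
    (P : ∀ i : Fin n, ((∀ j, A j) → ℝ) → (∀ j, A j) → A i → ℝ) : Prop :=
  ∀ u : ∀ i : Fin n, (∀ j, A j) → ℝ, (∃ p, PNE u p) →
    ∀ a0 : ∀ j, A j,
      Filter.Tendsto
        (fun t => ∑ b ∈ Finset.univ.filter (fun b => PNE u b),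
          evolve (fun i => P i (u i)) a0 t b)
        Filter.atTop (nhds 1)


/-- The stay-or-roll protocol: a node keeps its action if it is best-responding at
the current state, and otherwise picks an action uniformly at random. -/
noncomputable def SOR [∀ i, Fintype (A i)] [∀ i, DecidableEq (A i)]
    (i : Fin n) (ui : (∀ j, A j) → ℝ) (a : ∀ j, A j) (α : A i) : ℝ :=
  if IsBR1 ui i (a i) a then (if α = a i then 1 else 0)
  else 1 / (Fintype.card (A i))

/-! Under stay-or-roll every pure Nash equilibrium is absorbing, so on the finite state space it
self-stabilizes as soon as from every state some equilibrium is reachable through transitions of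
positive probability.

Such paths come from any self-stabilizing protocol `P`. If `q` is the unique equilibrium of a game
`w`, then `P` must keep every node at `q` with probability one. A node `i` best-responding at `c` in
a game `u` can be embedded, with its own utility, into a game whose unique equilibrium is `c`: the
other nodes play `c` while `i` plays `c i`, and otherwise either two of them play matching pennies,
or they copy a state at which `i`'s action is not a best response. So `P` never moves a
best-responding node, and its paths are paths of stay-or-roll. Both embeddings fail only when all
nodes but `i` and one other have a single action and `i` has a weakly dominant action; there
stay-or-roll reaches an equilibrium within three steps directly. -/

open Filter Topology Function Relation

section BestResponse

variable {ui : (∀ j, A j) → ℝ} {i : Fin n}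

lemma isBR1_congr {α : A i} {a b : ∀ j, A j} (h : ∀ j, j ≠ i → a j = b j) :
    IsBR1 ui i α a ↔ IsBR1 ui i α b := by
  have hab : ∀ γ : A i, update a i γ = update b i γ := fun γ => by
    ext j
    rcases eq_or_ne j i with rfl | hj
    · simp
    · simp [hj, h j hj]
  simp only [IsBR1, hab]

lemma isBR1_update_iff {α β : A i} {a : ∀ j, A j} :
    IsBR1 ui i α (update a i β) ↔ IsBR1 ui i α a :=
  isBR1_congr fun _ hj => update_of_ne hj _ _

lemma isBR1_of_subsingleton [Subsingleton (A i)] (α : A i) (a : ∀ j, A j) : IsBR1 ui i α a :=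
  fun β => by rw [Subsingleton.elim β α]

lemma exists_isBR1 [∀ i, Fintype (A i)] (ui : (∀ j, A j) → ℝ) (i : Fin n) (a : ∀ j, A j) :
    ∃ α : A i, IsBR1 ui i α a :=
  have : Nonempty (A i) := ⟨a i⟩
  Finite.exists_max fun β => ui (update a i β)

end BestResponse

lemma exists_two_nontrivial_or_subsingleton {ι : Type*} (B : ι → Type*) (i : ι) :
    (∃ j₁ j₂, j₁ ≠ j₂ ∧ j₁ ≠ i ∧ j₂ ≠ i ∧ Nontrivial (B j₁) ∧ Nontrivial (B j₂)) ∨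
      ∃ j, ∀ k, k ≠ i → k ≠ j → Subsingleton (B k) := by
  by_cases h : ∃ j, j ≠ i ∧ Nontrivial (B j)
  · obtain ⟨j, hji, hj⟩ := h
    by_cases h' : ∃ k, k ≠ i ∧ k ≠ j ∧ Nontrivial (B k)
    · obtain ⟨k, hki, hkj, hk⟩ := h'
      exact .inl ⟨j, k, hkj.symm, hji, hki, hj, hk⟩
    · push Not at h'
      exact .inr ⟨j, h'⟩
  · push Not at h
    exact .inr ⟨i, fun k hki _ => h k hki⟩

section Markov

variable [∀ i, Fintype (A i)]

def ValidReaction (f : ∀ i : Fin n, (∀ j, A j) → A i → ℝ) : Prop :=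
  ∀ (i : Fin n) (a : ∀ j, A j), (∀ α : A i, 0 ≤ f i a α) ∧ ∑ α : A i, f i a α = 1

def PosStep (f : ∀ i : Fin n, (∀ j, A j) → A i → ℝ) (a b : ∀ j, A j) : Prop :=
  0 < kernel f a b

variable {f : ∀ i : Fin n, (∀ j, A j) → A i → ℝ}

namespace ValidReaction

lemma le_one (hf : ValidReaction f) (i : Fin n) (a : ∀ j, A j) (α : A i) : f i a α ≤ 1 :=
  (hf i a).2 ▸ Finset.single_le_sum (fun β _ => (hf i a).1 β) (Finset.mem_univ α)

lemma eq_of_pos_of_eq_one (hf : ValidReaction f) {i : Fin n} {a : ∀ j, A j} {α β : A i}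
    (hα : f i a α = 1) (hβ : 0 < f i a β) : β = α := by
  by_contra hne
  have := Finset.add_le_sum (fun γ _ => (hf i a).1 γ) (Finset.mem_univ α) (Finset.mem_univ β)
    (Ne.symm hne)
  linarith [(hf i a).2]

lemma kernel_nonneg (hf : ValidReaction f) (a b : ∀ j, A j) : 0 ≤ kernel f a b :=
  Finset.prod_nonneg fun i _ => (hf i a).1 (b i)

lemma kernel_le_apply (hf : ValidReaction f) (a b : ∀ j, A j) (i : Fin n) :
    kernel f a b ≤ f i a (b i) := by
  rw [kernel, ← Finset.mul_prod_erase _ _ (Finset.mem_univ i)]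
  exact mul_le_of_le_one_right ((hf i a).1 _)
    (Finset.prod_le_one (fun j _ => (hf j a).1 _) fun j _ => hf.le_one j a _)

lemma kernel_le_one (hf : ValidReaction f) (a b : ∀ j, A j) : kernel f a b ≤ 1 :=
  Finset.prod_le_one (fun j _ => (hf j a).1 _) fun j _ => hf.le_one j a _

lemma sum_kernel (hf : ValidReaction f) (a : ∀ j, A j) : ∑ b, kernel f a b = 1 := by
  classical
  simp only [kernel, ← Fintype.prod_sum fun i (α : A i) => f i a α, (hf _ a).2,
    Finset.prod_const_one]

lemma posStep_iff (hf : ValidReaction f) {a b : ∀ j, A j} :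
    PosStep f a b ↔ ∀ i, 0 < f i a (b i) := by
  refine ⟨fun h i => ((hf i a).1 _).lt_of_ne ?_, fun h => Finset.prod_pos fun i _ => h i⟩
  exact (Finset.prod_ne_zero_iff.1 h.ne' i (Finset.mem_univ i)).symm

end ValidReaction

lemma ValidProto.reaction {P : ∀ i : Fin n, ((∀ j, A j) → ℝ) → (∀ j, A j) → A i → ℝ}
    (hval : ValidProto P) (u : Fin n → (∀ j, A j) → ℝ) : ValidReaction fun i => P i (u i) :=
  fun i a => hval i (u i) a

variable [∀ i, DecidableEq (A i)]

@[simp]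
lemma evolve_zero (a₀ b : ∀ j, A j) : evolve f a₀ 0 b = if b = a₀ then 1 else 0 := rfl

lemma evolve_succ (a₀ : ∀ j, A j) (t : ℕ) (b : ∀ j, A j) :
    evolve f a₀ (t + 1) b = ∑ a, evolve f a₀ t a * kernel f a b := rfl

lemma evolve_one (a b : ∀ j, A j) : evolve f a 1 b = kernel f a b := by
  simp [evolve_succ]

lemma evolve_add (a₀ : ∀ j, A j) (s t : ℕ) (b : ∀ j, A j) :
    evolve f a₀ (s + t) b = ∑ c, evolve f a₀ s c * evolve f c t b := by
  induction t generalizing b with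
  | zero => simp
  | succ t ih =>
    simp only [← add_assoc, evolve_succ, ih, Finset.sum_mul, Finset.mul_sum, mul_assoc]
    exact Finset.sum_comm

lemma sum_evolve_add (S : Finset (∀ j, A j)) (a₀ : ∀ j, A j) (s t : ℕ) :
    ∑ b ∈ S, evolve f a₀ (s + t) b = ∑ c, evolve f a₀ s c * ∑ b ∈ S, evolve f c t b := by
  simp only [evolve_add, Finset.mul_sum]
  exact Finset.sum_comm

namespace ValidReaction

lemma evolve_nonneg (hf : ValidReaction f) (a₀ : ∀ j, A j) (t : ℕ) (b : ∀ j, A j) :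
    0 ≤ evolve f a₀ t b := by
  induction t generalizing b with
  | zero => rw [evolve_zero]; split_ifs <;> norm_num
  | succ t ih => exact Finset.sum_nonneg fun a _ => mul_nonneg (ih a) (hf.kernel_nonneg a b)

lemma sum_evolve (hf : ValidReaction f) (a₀ : ∀ j, A j) (t : ℕ) : ∑ b, evolve f a₀ t b = 1 := by
  induction t with
  | zero => simp
  | succ t ih =>
    rw [sum_evolve_add, ← ih]
    simp [evolve_one, hf.sum_kernel]

lemma sum_evolve_le_one (hf : ValidReaction f) (S : Finset (∀ j, A j)) (a₀ : ∀ j, A j) (t : ℕ) :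
    ∑ b ∈ S, evolve f a₀ t b ≤ 1 :=
  hf.sum_evolve a₀ t ▸ Finset.sum_le_sum_of_subset_of_nonneg (Finset.subset_univ S)
    fun b _ _ => hf.evolve_nonneg a₀ t b

lemma exists_evolve_pos (hf : ValidReaction f) {a b : ∀ j, A j} (h : ReflTransGen (PosStep f) a b) :
    ∃ t, 0 < evolve f a t b := by
  induction h with
  | refl => exact ⟨0, by simp⟩
  | tail _ hcb ih =>
    obtain ⟨t, ht⟩ := ih
    refine ⟨t + 1, (mul_pos ht hcb).trans_le ?_⟩
    exact Finset.single_le_sum (f := fun c => evolve f a t c * kernel f c _)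
      (fun c _ => mul_nonneg (hf.evolve_nonneg a t c) (hf.kernel_nonneg c _)) (Finset.mem_univ _)

lemma reflTransGen_of_evolve_pos (hf : ValidReaction f) {a b : ∀ j, A j} {t : ℕ}
    (h : 0 < evolve f a t b) :
    ReflTransGen (PosStep f) a b := by
  induction t generalizing b with
  | zero =>
    rw [evolve_zero] at h
    split_ifs at h with hb
    · exact hb ▸ .refl
    · exact absurd h (lt_irrefl 0)
  | succ t ih =>
    obtain ⟨c, -, hc⟩ : ∃ c ∈ Finset.univ, 0 < evolve f a t c * kernel f c b :=
      Finset.exists_lt_of_sum_lt (by rwa [Finset.sum_const_zero])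
    have hc' : evolve f a t c * kernel f c b ≠ 0 := hc.ne'
    exact .tail (ih ((hf.evolve_nonneg a t c).lt_of_ne (left_ne_zero_of_mul hc').symm))
      ((hf.kernel_nonneg c b).lt_of_ne (right_ne_zero_of_mul hc').symm)

lemma exists_mem_reflTransGen_of_tendsto (hf : ValidReaction f) {S : Finset (∀ j, A j)}
    {a : ∀ j, A j} (h : Tendsto (fun t => ∑ b ∈ S, evolve f a t b) atTop (𝓝 1)) :
    ∃ b ∈ S, ReflTransGen (PosStep f) a b := by
  obtain ⟨t, ht⟩ := (h.eventually (eventually_gt_nhds one_pos)).exists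
  obtain ⟨b, hb, hpos⟩ : ∃ b ∈ S, 0 < evolve f a t b :=
    Finset.exists_lt_of_sum_lt (by rwa [Finset.sum_const_zero])
  exact ⟨b, hb, hf.reflTransGen_of_evolve_pos hpos⟩

end ValidReaction

variable {S : Finset (∀ j, A j)}

lemma ValidReaction.sum_evolve_mono (hf : ValidReaction f)
    (hS : ∀ a ∈ S, ∀ b, PosStep f a b → b ∈ S) (a : ∀ j, A j) :
    Monotone fun t => ∑ b ∈ S, evolve f a t b := by
  have hstay : ∀ c ∈ S, ∑ b ∈ S, kernel f c b = 1 := fun c hc => by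
    rw [← hf.sum_kernel c]
    refine Finset.sum_subset (Finset.subset_univ S) fun b _ hb => ?_
    exact (hf.kernel_nonneg c b).eq_or_lt.elim Eq.symm fun h => absurd (hS c hc b h) hb
  refine monotone_nat_of_le_succ fun t => ?_
  simp only [sum_evolve_add, evolve_one]
  calc ∑ b ∈ S, evolve f a t b = ∑ c ∈ S, evolve f a t c * ∑ b ∈ S, kernel f c b :=
        Finset.sum_congr rfl fun c hc => by rw [hstay c hc, mul_one]
    _ ≤ ∑ c, evolve f a t c * ∑ b ∈ S, kernel f c b :=
        Finset.sum_le_sum_of_subset_of_nonneg (Finset.subset_univ S) fun c _ _ =>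
          mul_nonneg (hf.evolve_nonneg a t c) (Finset.sum_nonneg fun b _ => hf.kernel_nonneg c b)

/-- The mass outside `S` shrinks by the factor `1 - ε` every `N` steps, where `ε` is the least
probability, over all starting states, of being in `S` at time `N`. -/
lemma ValidReaction.tendsto_sum_evolve_of_reach (hf : ValidReaction f)
    (hS : ∀ a ∈ S, ∀ b, PosStep f a b → b ∈ S)
    (hreach : ∀ a, ∃ b ∈ S, ReflTransGen (PosStep f) a b) (a₀ : ∀ j, A j) :
    Tendsto (fun t => ∑ b ∈ S, evolve f a₀ t b) atTop (𝓝 1) := by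
  set M : (∀ j, A j) → ℕ → ℝ := fun a t => ∑ b ∈ S, evolve f a t b with hM
  have hmono := hf.sum_evolve_mono hS
  obtain ⟨N, hN⟩ : ∃ N, ∀ c, 0 < M c N := by
    refine (eventually_all (l := atTop).2 fun c => ?_).exists
    obtain ⟨q, hq, hcq⟩ := hreach c
    obtain ⟨t, ht⟩ := hf.exists_evolve_pos hcq
    refine eventually_atTop.2 ⟨t, fun s hs => lt_of_lt_of_le ?_ (hmono c hs)⟩
    exact ht.trans_le (Finset.single_le_sum (fun b _ => hf.evolve_nonneg c t b) hq)
  have : Nonempty (∀ j, A j) := ⟨a₀⟩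
  obtain ⟨c₀, hc₀⟩ := Finite.exists_min fun c => M c N
  have hout : ∀ a s t, 1 - M a (s + t) = ∑ c, evolve f a s c * (1 - M c t) := fun a s t => by
    simp only [hM, sum_evolve_add, mul_sub, mul_one, Finset.sum_sub_distrib, hf.sum_evolve]
  have hstep : ∀ c, 1 - M c N ≤ (1 - M c₀ N) * (1 - M c 0) := fun c => by
    by_cases hc : c ∈ S
    · have h0 : M c 0 = 1 := by simp [hM, hc]
      have := hmono c (Nat.zero_le N)
      simp only [h0] at this ⊢
      linarith
    · have h0 : M c 0 = 0 := by simp [hM, hc]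
      simp only [h0]
      linarith [hc₀ c]
  have hcontr : ∀ s, 1 - M a₀ (s + N) ≤ (1 - M c₀ N) * (1 - M a₀ s) := fun s => by
    rw [hout, ← add_zero s, hout, add_zero, Finset.mul_sum]
    refine Finset.sum_le_sum fun c _ => ?_
    rw [mul_left_comm]
    exact mul_le_mul_of_nonneg_left (hstep c) (hf.evolve_nonneg a₀ s c)
  have hbdd : ∀ t, M a₀ t ≤ 1 := hf.sum_evolve_le_one S a₀
  have hL := tendsto_atTop_ciSup (hmono a₀) ⟨1, Set.forall_mem_range.2 hbdd⟩
  set L := ⨆ t, M a₀ t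
  have hshift : Tendsto (fun s => 1 - M a₀ (s + N)) atTop (𝓝 (1 - L)) :=
    (hL.comp (tendsto_add_atTop_nat N)).const_sub 1
  have hlim : 1 - L ≤ (1 - M c₀ N) * (1 - L) :=
    le_of_tendsto_of_tendsto' hshift ((hL.const_sub 1).const_mul _) hcontr
  have hL1 : L ≤ 1 := le_of_tendsto' hL hbdd
  convert hL
  nlinarith [hN c₀]

end Markov

def IsUniquePNE (w : Fin n → (∀ j, A j) → ℝ) (q : ∀ j, A j) : Prop :=
  ∀ b, PNE w b ↔ b = q

section Pinning

variable [∀ i, Fintype (A i)] [∀ i, DecidableEq (A i)]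
  {P : ∀ i : Fin n, ((∀ j, A j) → ℝ) → (∀ j, A j) → A i → ℝ}

lemma ValidReaction.kernel_self_eq_one {f : ∀ i : Fin n, (∀ j, A j) → A i → ℝ}
    (hf : ValidReaction f) {q : ∀ j, A j}
    (h : Tendsto (fun t => evolve f q t q) atTop (𝓝 1)) : kernel f q q = 1 := by
  have hstep : ∀ t, evolve f q (t + 1) q ≤ 1 - evolve f q t q * (1 - kernel f q q) := fun t => by
    have hrest : ∑ a ∈ Finset.univ.erase q, evolve f q t a * kernel f a q ≤
        ∑ a ∈ Finset.univ.erase q, evolve f q t a :=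
      Finset.sum_le_sum fun a _ =>
        mul_le_of_le_one_right (hf.evolve_nonneg q t a) (hf.kernel_le_one a q)
    have hmass := Finset.add_sum_erase Finset.univ (evolve f q t) (Finset.mem_univ q)
    rw [evolve_succ, ← Finset.add_sum_erase _ _ (Finset.mem_univ q)]
    linarith [hf.sum_evolve q t, hf.evolve_nonneg q t q]
  have hlim := le_of_tendsto_of_tendsto' (h.comp (tendsto_add_atTop_nat 1))
    (((h.mul_const _).const_sub 1)) hstep
  linarith [hf.kernel_le_one q q]

lemma apply_eq_one_of_isUniquePNE (hval : ValidProto P) (hP : SelfStab P)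
    {w : Fin n → (∀ j, A j) → ℝ} {q : ∀ j, A j} (hw : IsUniquePNE w q) (i : Fin n) :
    P i (w i) q (q i) = 1 := by
  have hfilter : Finset.univ.filter (fun b => PNE w b) = {q} := by
    ext b
    simp [hw b]
  have h := hP w ⟨q, (hw q).2 rfl⟩ q
  simp only [hfilter, Finset.sum_singleton] at h
  have hf := hval.reaction w
  have := hf.kernel_le_apply q q i
  linarith [hf.kernel_self_eq_one h, hf.le_one i q (q i)]

end Pinning

section PartnerGames

variable {ui : (∀ j, A j) → ℝ} {i : Fin n}

/-- Node `i` plays with utility `ui`; every other node `k` is rewarded exactly for playing the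
action `G b k` at state `b`. -/
noncomputable def followGame (ui : (∀ j, A j) → ℝ) (i : Fin n) (G : (∀ j, A j) → ∀ j, A j) :
    Fin n → (∀ j, A j) → ℝ :=
  fun k b => if k = i then ui b else if b k = G b k then 1 else 0

lemma followGame_self (G : (∀ j, A j) → ∀ j, A j) : followGame ui i G i = ui :=
  funext fun _ => if_pos rfl

lemma isBR1_followGame_iff {G : (∀ j, A j) → ∀ j, A j} {k : Fin n} (hk : k ≠ i)
    (hG : ∀ b (β : A k), G (update b k β) k = G b k) {α : A k} {b : ∀ j, A j} :
    IsBR1 (followGame ui i G k) k α b ↔ α = G b k := by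
  simp only [IsBR1, followGame, if_neg hk, update_self, hG]
  refine ⟨fun h => ?_, fun h β => ?_⟩
  · by_contra hne
    exact absurd (h (G b k)) (by simp [hne])
  · rw [if_pos h]
    split_ifs <;> norm_num

lemma pne_followGame_iff {G : (∀ j, A j) → ∀ j, A j}
    (hG : ∀ k, k ≠ i → ∀ b (β : A k), G (update b k β) k = G b k) {b : ∀ j, A j} :
    PNE (followGame ui i G) b ↔ IsBR1 ui i (b i) b ∧ ∀ k, k ≠ i → b k = G b k := by
  refine ⟨fun h => ⟨?_, fun k hk => (isBR1_followGame_iff hk (hG k hk)).1 (h k)⟩,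
    fun ⟨hi, hk⟩ k => ?_⟩
  · simpa only [followGame_self] using h i
  · rcases eq_or_ne k i with rfl | hki
    · simpa only [followGame_self] using hi
    · exact (isBR1_followGame_iff hki (hG k hki)).2 (hk k hki)

lemma isUniquePNE_followGame {G : (∀ j, A j) → ∀ j, A j} {q : ∀ j, A j}
    (hG : ∀ k, k ≠ i → ∀ b (β : A k), G (update b k β) k = G b k)
    (hGq : ∀ b, b i = q i → G b = q) (hq : IsBR1 ui i (q i) q)
    (hoff : ∀ b, b i ≠ q i → IsBR1 ui i (b i) b → ∃ k, k ≠ i ∧ b k ≠ G b k) :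
    IsUniquePNE (followGame ui i G) q := by
  refine fun b => (pne_followGame_iff hG).trans ⟨fun ⟨hbi, hbG⟩ => ?_, fun hb => ?_⟩
  · by_cases hb : b i = q i
    · ext k
      rcases eq_or_ne k i with rfl | hki
      · exact hb
      · rw [hbG k hki, hGq b hb]
    · obtain ⟨k, hki, hk⟩ := hoff b hb hbi
      exact absurd (hbG k hki) hk
  · subst hb
    exact ⟨hq, fun k _ => by rw [hGq b rfl]⟩

/-- The other nodes copy a state at which the current action of `i` is not a best response. -/
lemma exists_isUniquePNE_of_not_wdom {q : ∀ j, A j} (hq : IsBR1 ui i (q i) q)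
    (hnd : ∀ v, v ≠ q i → ¬ WDom ui i v) : ∃ w, w i = ui ∧ IsUniquePNE w q := by
  simp only [WDom, not_forall] at hnd
  choose s hs using hnd
  let T : A i → ∀ j, A j := fun v => if h : v = q i then q else s v h
  refine ⟨followGame ui i fun b => T (b i), followGame_self _, isUniquePNE_followGame
    (fun k hk b β => by rw [update_of_ne hk.symm]) (fun b hb => dif_pos hb) hq fun b hb hbi => ?_⟩
  by_contra! hbT
  refine hs (b i) hb ((isBR1_congr fun k hk => ?_).1 hbi)
  simp only [hbT k hk, T, dif_neg hb]

/-- Two further nontrivial nodes play matching pennies as soon as `i` leaves `q i`. -/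
lemma exists_isUniquePNE_of_nontrivial {q : ∀ j, A j} (hq : IsBR1 ui i (q i) q)
    {j₁ j₂ : Fin n} (h₁₂ : j₁ ≠ j₂) (h₁ : j₁ ≠ i) (h₂ : j₂ ≠ i)
    [Nontrivial (A j₁)] [Nontrivial (A j₂)] : ∃ w, w i = ui ∧ IsUniquePNE w q := by
  obtain ⟨x, hx⟩ := exists_ne (q j₁)
  obtain ⟨y, hy⟩ := exists_ne (q j₂)
  let G : (∀ j, A j) → ∀ j, A j := fun b => if b i = q i then q else
    update (update q j₁ (if b j₂ = q j₂ then q j₁ else x)) j₂ (if b j₁ = q j₁ then y else q j₂)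
  have hG₁ : ∀ b, b i ≠ q i → G b j₁ = if b j₂ = q j₂ then q j₁ else x := fun b hb => by
    simp [G, hb, h₁₂]
  have hG₂ : ∀ b, b i ≠ q i → G b j₂ = if b j₁ = q j₁ then y else q j₂ := fun b hb => by
    simp [G, hb]
  refine ⟨followGame ui i G, followGame_self _, isUniquePNE_followGame ?_ (fun b hb => if_pos hb)
    hq fun b hb _ => ?_⟩
  · intro k hk b β
    by_cases hb : b i = q i
    · simp [G, hb, update_of_ne hk.symm]
    · simp only [G, update_of_ne hk.symm, if_neg hb]
      rcases eq_or_ne k j₂ with rfl | hk₂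
      · simp [update_of_ne h₁₂]
      rcases eq_or_ne k j₁ with rfl | hk₁
      · simp [update_of_ne h₁₂.symm, hk₂]
      · simp [hk₁, hk₂]
  · by_contra! hfix
    have e₁ := hfix j₁ h₁
    have e₂ := hfix j₂ h₂
    rw [hG₁ b hb] at e₁
    rw [hG₂ b hb] at e₂
    by_cases hb₁ : b j₁ = q j₁
    · rw [if_pos hb₁] at e₂
      rw [e₂, if_neg hy] at e₁
      exact hx (e₁ ▸ hb₁)
    · rw [if_neg hb₁] at e₂
      rw [e₂, if_pos rfl] at e₁
      exact hb₁ e₁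

end PartnerGames

section StayOrRoll

variable {u : Fin n → (∀ j, A j) → ℝ}

/-- The transitions of positive probability under stay-or-roll. -/
def SorStep (u : Fin n → (∀ j, A j) → ℝ) (a b : ∀ j, A j) : Prop :=
  ∀ i, IsBR1 (u i) i (a i) a → b i = a i

lemma sorStep_update {b : ∀ j, A j} {k : Fin n} (hk : ¬ IsBR1 (u k) k (b k) b) (y : A k) :
    SorStep u b (update b k y) := fun m hm => by
  rcases eq_or_ne m k with rfl | hmk
  · exact absurd hm hk
  · exact update_of_ne hmk _ _

lemma eq_of_sorStep_of_pne {p b : ∀ j, A j} (hp : PNE u p) (h : SorStep u p b) : b = p :=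
  funext fun i => h i (hp i)

variable [∀ i, Fintype (A i)]

lemma exists_sorStep_isBR1 {b : ∀ j, A j} {k : Fin n} (hk : ¬ IsBR1 (u k) k (b k) b) :
    ∃ c, SorStep u b c ∧ IsBR1 (u k) k (c k) c ∧ ∀ m, m ≠ k → c m = b m := by
  obtain ⟨y, hy⟩ := exists_isBR1 (u k) k b
  exact ⟨update b k y, sorStep_update hk y, by rwa [update_self, isBR1_update_iff],
    fun m hm => update_of_ne hm _ _⟩

/-- Node `i` first reaches `v` (after at most one best-response move of `j`), and then one
best-response move of `j` ends at an equilibrium. -/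
lemma exists_sorReach_of_wdom {i j : Fin n} (hsub : ∀ k, k ≠ i → k ≠ j → Subsingleton (A k))
    {v : A i} (hv : WDom (u i) i v) (b : ∀ j, A j) :
    ∃ q, PNE u q ∧ ReflTransGen (SorStep u) b q := by
  have hpne : ∀ c, IsBR1 (u i) i (c i) c → IsBR1 (u j) j (c j) c → PNE u c := fun c hi hj k => by
    rcases eq_or_ne k i with rfl | hki
    · exact hi
    rcases eq_or_ne k j with rfl | hkj
    · exact hj
    have := hsub k hki hkj
    exact isBR1_of_subsingleton _ _
  have hfrom_v : ∀ c, c i = v → ∃ q, PNE u q ∧ ReflTransGen (SorStep u) c q := fun c hc => by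
    have hci : IsBR1 (u i) i (c i) c := hc ▸ hv c
    by_cases hcj : IsBR1 (u j) j (c j) c
    · exact ⟨c, hpne c hci hcj, .refl⟩
    obtain ⟨d, hcd, hdj, hdc⟩ := exists_sorStep_isBR1 hcj
    refine ⟨d, hpne d ?_ hdj, .single hcd⟩
    rcases eq_or_ne i j with rfl | hij
    · exact hdj
    · rw [hdc i hij, hc]
      exact hv d
  have hmove : ∀ c, ¬ IsBR1 (u i) i (c i) c → ∃ q, PNE u q ∧ ReflTransGen (SorStep u) c q :=
    fun c hc => by
      obtain ⟨q, hq, hcq⟩ := hfrom_v (update c i v) (update_self _ _ _)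
      exact ⟨q, hq, .head (sorStep_update hc v) hcq⟩
  by_cases hbi : IsBR1 (u i) i (b i) b
  · by_cases hbj : IsBR1 (u j) j (b j) b
    · exact ⟨b, hpne b hbi hbj, .refl⟩
    obtain ⟨c, hbc, hcj, -⟩ := exists_sorStep_isBR1 hbj
    by_cases hci : IsBR1 (u i) i (c i) c
    · exact ⟨c, hpne c hci hcj, .single hbc⟩
    obtain ⟨q, hq, hcq⟩ := hmove c hci
    exact ⟨q, hq, .head hbc hcq⟩
  · exact hmove b hbi

variable [∀ i, DecidableEq (A i)]

lemma sor_pos_iff {i : Fin n} {ui : (∀ j, A j) → ℝ} {a : ∀ j, A j} {α : A i} :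
    0 < SOR i ui a α ↔ (IsBR1 ui i (a i) a → α = a i) := by
  have : (0 : ℝ) < Fintype.card (A i) := Nat.cast_pos.2 (Fintype.card_pos_iff.2 ⟨a i⟩)
  unfold SOR
  split_ifs <;> simp_all

lemma validProto_sor : ValidProto fun i => SOR (A := A) i := by
  intro i ui a
  have : (Fintype.card (A i) : ℝ) ≠ 0 := Nat.cast_ne_zero.2 (Fintype.card_pos_iff.2 ⟨a i⟩).ne'
  simp only [SOR]
  split_ifs
  · exact ⟨fun α => by split_ifs <;> norm_num, by simp⟩
  · exact ⟨fun α => by positivity, by simp [this]⟩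

lemma posStep_sor_iff (u : Fin n → (∀ j, A j) → ℝ) {a b : ∀ j, A j} :
    PosStep (fun i => SOR i (u i)) a b ↔ SorStep u a b :=
  ((validProto_sor.reaction u).posStep_iff).trans (forall_congr' fun _ => sor_pos_iff)

lemma tendsto_pne_sor (hreach : ∀ b, ∃ q, PNE u q ∧ ReflTransGen (SorStep u) b q)
    (a₀ : ∀ j, A j) :
    Tendsto (fun t => ∑ b ∈ Finset.univ.filter (fun b => PNE u b),
      evolve (fun i => SOR i (u i)) a₀ t b) atTop (𝓝 1) := by
  refine (validProto_sor.reaction u).tendsto_sum_evolve_of_reach (fun p hp b hpb => ?_)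
    (fun b => ?_) a₀
  · rw [Finset.mem_filter] at hp
    rw [eq_of_sorStep_of_pne hp.2 ((posStep_sor_iff u).1 hpb), Finset.mem_filter]
    exact hp
  · obtain ⟨q, hq, hbq⟩ := hreach b
    exact ⟨q, Finset.mem_filter.2 ⟨Finset.mem_univ q, hq⟩,
      ReflTransGen.mono (fun _ _ => (posStep_sor_iff u).2) _ _ hbq⟩

end StayOrRoll

section Transfer

variable [∀ i, Fintype (A i)]
  {P : ∀ i : Fin n, ((∀ j, A j) → ℝ) → (∀ j, A j) → A i → ℝ} {u : Fin n → (∀ j, A j) → ℝ}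

lemma sorStep_of_posStep (hval : ValidProto P)
    (hpin : ∀ c i, IsBR1 (u i) i (c i) c → P i (u i) c (c i) = 1) {a b : ∀ j, A j}
    (h : PosStep (fun i => P i (u i)) a b) : SorStep u a b := fun i hi =>
  (hval.reaction u).eq_of_pos_of_eq_one (hpin a i hi) ((hval.reaction u).posStep_iff.1 h i)

variable [∀ i, DecidableEq (A i)]

lemma apply_eq_one_of_isBR1 (hval : ValidProto P) (hP : SelfStab P)
    (hdom : ∀ i j, (∀ k, k ≠ i → k ≠ j → Subsingleton (A k)) → ∀ v, ¬ WDom (u i) i v)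
    {c : ∀ j, A j} {i : Fin n} (hc : IsBR1 (u i) i (c i) c) : P i (u i) c (c i) = 1 := by
  obtain ⟨w, hwi, hw⟩ : ∃ w, w i = u i ∧ IsUniquePNE w c := by
    rcases exists_two_nontrivial_or_subsingleton A i with ⟨j₁, j₂, h₁₂, h₁, h₂, _, _⟩ | ⟨j, hj⟩
    · exact exists_isUniquePNE_of_nontrivial hc h₁₂ h₁ h₂
    · exact exists_isUniquePNE_of_not_wdom hc fun v _ => hdom i j hj v
  exact hwi ▸ apply_eq_one_of_isUniquePNE hval hP hw i

lemma exists_sorReach_of_selfStab (hval : ValidProto P) (hP : SelfStab P)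
    (hpne : ∃ p, PNE u p) (b : ∀ j, A j) : ∃ q, PNE u q ∧ ReflTransGen (SorStep u) b q := by
  by_cases hdom : ∃ i j, (∀ k, k ≠ i → k ≠ j → Subsingleton (A k)) ∧ ∃ v, WDom (u i) i v
  · obtain ⟨i, j, hsub, v, hv⟩ := hdom
    exact exists_sorReach_of_wdom hsub hv b
  have hpin : ∀ c i, IsBR1 (u i) i (c i) c → P i (u i) c (c i) = 1 := fun c i =>
    apply_eq_one_of_isBR1 hval hP fun i j hsub v hv => hdom ⟨i, j, hsub, v, hv⟩
  obtain ⟨q, hq, hbq⟩ := (hval.reaction u).exists_mem_reflTransGen_of_tendsto (hP u hpne b)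
  exact ⟨q, (Finset.mem_filter.1 hq).2,
    ReflTransGen.mono (fun _ _ => sorStep_of_posStep hval hpin) _ _ hbq⟩

end Transfer

theorem stmt15_general (n : ℕ) (A : Fin n → Type*)
    [∀ i, Fintype (A i)] [∀ i, DecidableEq (A i)] :
    (∃ P : ∀ i : Fin n, ((∀ j, A j) → ℝ) → (∀ j, A j) → A i → ℝ,
      ValidProto P ∧ SelfStab P) ↔
    SelfStab (fun i : Fin n => SOR (A := A) i) :=
  ⟨fun ⟨_, hval, hP⟩ _ hpne => tendsto_pne_sor (exists_sorReach_of_selfStab hval hP hpne),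
    fun h => ⟨_, validProto_sor, h⟩⟩

/-- For every `n`-node state space `A`, there is a historyless randomized uncoupled
protocol self-stabilizing on all games over `A` if and only if the stay-or-roll
protocol is self-stabilizing on all games over `A`. -/
theorem stmt15 (n : ℕ) (A : Fin n → Type*)
    [∀ i, Fintype (A i)] [∀ i, DecidableEq (A i)] [∀ i, Nonempty (A i)] :
    (∃ P : ∀ i : Fin n, ((∀ j, A j) → ℝ) → (∀ j, A j) → A i → ℝ,
      ValidProto P ∧ SelfStab P) ↔
    SelfStab (fun i : Fin n => SOR (A := A) i) :=
  stmt15_general n A
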